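/- Let g ≥ 2 and let M be the g×g integer matrix of the symmetric construction. Let m ∈ ℤ^g satisfy m₁ = 0 and m₂ = m₃ = ⋯ = m_g, with this common value odd. Then for every n ∈ ℤ^g, the integer ⟨Mᵀn, m + (M − Mᵀ)n⟩ is even, where ⟨x,y⟩ = ∑_{j=1}^g x_j y_j. (Explicitly, writing σ = n₂ + ⋯ + n_g, this integer equals σ(m₂ − 2n₁ − σ), which is always even.) -/

import Mathlib

noncomputable section
open Matrix

/-- The integer matrix `M` of the symmetric construction: `M_{j,1} = -1` for all `j`,
`M_{j, g+2-j} = 1` for `2 ≤ j ≤ g`, all other entries `0` (1-based indexing). -/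
def symM (g : ℕ) : Matrix (Fin g) (Fin g) ℤ :=
  Matrix.of fun j k =>
    if (k : ℕ) = 0 then -1 else if (j : ℕ) + (k : ℕ) = g then 1 else 0

theorem symM_pairing_even (g : ℕ) (hg : 2 ≤ g) (m : Fin g → ℤ) (v : ℤ)
    (hv : Odd v)
    (hm0 : ∀ j : Fin g, (j : ℕ) = 0 → m j = 0)
    (hm : ∀ j : Fin g, (j : ℕ) ≠ 0 → m j = v) :
    ∀ n : Fin g → ℤ,
      Even ((symM g)ᵀ.mulVec n ⬝ᵥ (m + (symM g - (symM g)ᵀ).mulVec n)) := by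
  intro n
  haveI : NeZero g := ⟨by omega⟩
  set z0 : Fin g := ⟨0, by omega⟩ with hz0
  set S : ℤ := ∑ k, n k with hS
  set u : Fin g → ℤ := (symM g)ᵀ.mulVec n with hu_def
  -- value of `Mᵀ n`
  have hu : ∀ j : Fin g, u j =
      if _ : (j:ℕ) = 0 then -S else n ⟨g - (j:ℕ), by omega⟩ := by
    intro j
    rw [hu_def, Matrix.mulVec, dotProduct]
    by_cases h : (j:ℕ) = 0
    · simp [symM, h, hS]
      exact fun hj => absurd (Fin.ext (by simp [h])) hj
    · simp only [transpose_apply, symM, of_apply, h, if_false, dif_neg h]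
      have key : ∀ k : Fin g, ((k:ℕ) + (j:ℕ) = g) ↔ k = (⟨g - (j:ℕ), by omega⟩ : Fin g) := by
        intro k
        rw [Fin.ext_iff]
        have := j.isLt
        have := k.isLt
        simp only []
        omega
      simp_rw [key]
      simp [Finset.sum_ite_eq']
  -- value of `M n`
  have hv' : ∀ j : Fin g, (symM g).mulVec n j =
      -n z0 + (if _ : (j:ℕ) = 0 then 0 else n ⟨g - (j:ℕ), by omega⟩) := by
    intro j
    rw [Matrix.mulVec, dotProduct]
    have hjl := j.isLt
    by_cases h : (j:ℕ) = 0
    · simp only [dif_pos h, add_zero, symM, of_apply]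
      rw [Finset.sum_eq_single z0]
      · simp [hz0]
      · intro k _ hk
        have hk0 : (k:ℕ) ≠ 0 := fun hh => hk (Fin.ext hh)
        have : ¬ ((j:ℕ) + (k:ℕ) = g) := by have := k.isLt; omega
        rw [if_neg hk0, if_neg this]; ring
      · simp
    · rw [dif_neg h]
      have hjp := Nat.pos_of_ne_zero h
      have step : ∀ k : Fin g, (symM g) j k * n k =
          (if k = z0 then -n k else 0)
          + (if k = (⟨g - (j:ℕ), by omega⟩ : Fin g) then n k else 0) := by
        intro k
        simp only [symM, of_apply]
        have hkl := k.isLt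
        by_cases hk0 : (k:ℕ) = 0
        · have e1 : k = z0 := Fin.ext hk0
          have e2 : k ≠ (⟨g - (j:ℕ), by omega⟩ : Fin g) := by
            intro hh; rw [Fin.ext_iff] at hh; simp only [] at hh; omega
          rw [if_pos hk0, if_pos e1, if_neg e2]; ring
        · have e1 : k ≠ z0 := by
            intro hh; rw [Fin.ext_iff] at hh; simp only [hz0] at hh; omega
          rw [if_neg hk0, if_neg e1]
          by_cases hk2 : (j:ℕ) + (k:ℕ) = g
          · have e2 : k = (⟨g - (j:ℕ), by omega⟩ : Fin g) := by
              rw [Fin.ext_iff]; simp only []; omega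
            rw [if_pos hk2, if_pos e2]; ring
          · have e2 : k ≠ (⟨g - (j:ℕ), by omega⟩ : Fin g) := by
              intro hh; rw [Fin.ext_iff] at hh; simp only [] at hh; omega
            rw [if_neg hk2, if_neg e2]; ring
      simp_rw [step]
      rw [Finset.sum_add_distrib, Finset.sum_ite_eq' Finset.univ,
        Finset.sum_ite_eq' Finset.univ]
      simp
  -- the sum of the coordinates of `Mᵀ n`
  have sum_u : ∑ j, u j = -n z0 := by
    rw [hu_def]
    simp only [Matrix.mulVec, dotProduct, transpose_apply]
    rw [Finset.sum_comm]
    have rowsum : ∀ k : Fin g, ∑ j, symM g k j = if (k:ℕ) = 0 then -1 else 0 := by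
      intro k
      have hkl := k.isLt
      by_cases hk : (k:ℕ) = 0
      · rw [if_pos hk]
        simp only [symM, of_apply]
        rw [Finset.sum_eq_single z0]
        · simp [hz0]
        · intro j _ hj
          have hj0 : (j:ℕ) ≠ 0 := fun hh => hj (Fin.ext hh)
          have : ¬ ((k:ℕ) + (j:ℕ) = g) := by have := j.isLt; omega
          rw [if_neg hj0, if_neg this]
        · simp
      · rw [if_neg hk]
        have hkp := Nat.pos_of_ne_zero hk
        have step : ∀ j : Fin g, symM g k j =
            (if j = z0 then (-1:ℤ) else 0)
            + (if j = (⟨g - (k:ℕ), by omega⟩ : Fin g) then 1 else 0) := by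
          intro j
          simp only [symM, of_apply]
          have hjl := j.isLt
          by_cases hj0 : (j:ℕ) = 0
          · have e1 : j = z0 := Fin.ext hj0
            have e2 : j ≠ (⟨g - (k:ℕ), by omega⟩ : Fin g) := by
              intro hh; rw [Fin.ext_iff] at hh; simp only [] at hh; omega
            rw [if_pos hj0, if_pos e1, if_neg e2]; ring
          · have e1 : j ≠ z0 := by
              intro hh; rw [Fin.ext_iff] at hh; simp only [hz0] at hh; omega
            rw [if_neg hj0, if_neg e1]
            by_cases hk2 : (k:ℕ) + (j:ℕ) = g
            · have e2 : j = (⟨g - (k:ℕ), by omega⟩ : Fin g) := by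
                rw [Fin.ext_iff]; simp only []; omega
              rw [if_pos hk2, if_pos e2]; ring
            · have e2 : j ≠ (⟨g - (k:ℕ), by omega⟩ : Fin g) := by
                intro hh; rw [Fin.ext_iff] at hh; simp only [] at hh; omega
              rw [if_neg hk2, if_neg e2]; ring
        simp_rw [step]
        rw [Finset.sum_add_distrib, Finset.sum_ite_eq' Finset.univ,
          Finset.sum_ite_eq' Finset.univ]
        simp
    calc ∑ k : Fin g, ∑ j : Fin g, symM g k j * n k
        = ∑ k : Fin g, (if (k:ℕ) = 0 then (-1:ℤ) else 0) * n k := by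
          apply Finset.sum_congr rfl
          intro k _
          rw [← Finset.sum_mul, rowsum k]
      _ = ∑ k : Fin g, (if k = z0 then -n k else 0) := by
          apply Finset.sum_congr rfl
          intro k _
          by_cases hk : (k:ℕ) = 0
          · rw [if_pos hk, if_pos (Fin.ext hk : k = z0)]; ring
          · have : k ≠ z0 := fun hh => hk (by rw [hh])
            rw [if_neg hk, if_neg this]; ring
      _ = -n z0 := by rw [Finset.sum_ite_eq' Finset.univ]; simp
  -- the main computation
  have key : u ⬝ᵥ (m + (symM g - (symM g)ᵀ).mulVec n)
      = (S - n z0) * (v - n z0 - S) := by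
    rw [dotProduct]
    rw [← Finset.add_sum_erase _ _ (Finset.mem_univ z0)]
    have hz0v : ((z0:Fin g):ℕ) = 0 := rfl
    have term0 : u z0 * ((m + (symM g - (symM g)ᵀ).mulVec n) z0) = -S * (S - n z0) := by
      rw [Pi.add_apply, Matrix.sub_mulVec, Pi.sub_apply, hv' z0, hm0 z0 hz0v,
        ← hu_def, hu z0, dif_pos hz0v, dif_pos hz0v]
      ring
    have terms : ∀ j ∈ Finset.univ.erase z0,
        u j * ((m + (symM g - (symM g)ᵀ).mulVec n) j) = u j * (v - n z0) := by
      intro j hj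
      have hj0 : (j:ℕ) ≠ 0 := by
        intro hh
        exact (Finset.mem_erase.mp hj).1 (Fin.ext hh)
      rw [Pi.add_apply, Matrix.sub_mulVec, Pi.sub_apply, hv' j, hm j hj0,
        ← hu_def, hu j, dif_neg hj0, dif_neg hj0]
      ring
    rw [term0, Finset.sum_congr rfl terms, ← Finset.sum_mul,
      Finset.sum_erase_eq_sub (Finset.mem_univ z0), sum_u, hu z0, dif_pos hz0v]
    ring
  rw [key]
  obtain ⟨a, ha⟩ := hv
  rcases Int.even_or_odd (S - n z0) with ⟨b, hb⟩ | ⟨b, hb⟩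
  · exact ⟨b * (v - n z0 - S), by rw [hb]; ring⟩
  · refine ⟨(2*b+1) * (a - b - n z0), ?_⟩
    have : S = 2*b + 1 + n z0 := by omega
    rw [this, ha]; ring
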